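/- arXiv:2104.10385 — 3 statements merged into one kernel-verified Lean document; each statement's English description precedes it below -/
import Mathlib

section
/- Let λ₁,…,λ_N, β₁,…,β_N be real numbers and define f(ν) = Σₙ βₙ²·(2ν−λₙ)/(λₙ−ν)². If ν₁ and ν₂ both satisfy the secular equation Σₙ (βₙ/(ν−λₙ))² = 1 (with ν ≠ λₙ for all n), and ν₁ ≥ ν₂, then f(ν₁) ≥ f(ν₂). -/
theorem stmt_0 (N : ℕ) (lam β : Fin N → ℝ) (ν₁ ν₂ : ℝ)
    (h₁ : ∀ n, ν₁ ≠ lam n) (h₂ : ∀ n, ν₂ ≠ lam n)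
    (hr₁ : ∑ n, (β n / (ν₁ - lam n)) ^ 2 = 1)
    (hr₂ : ∑ n, (β n / (ν₂ - lam n)) ^ 2 = 1)
    (hle : ν₂ ≤ ν₁) :
    ∑ n, (β n) ^ 2 * (2 * ν₂ - lam n) / (lam n - ν₂) ^ 2 ≤
      ∑ n, (β n) ^ 2 * (2 * ν₁ - lam n) / (lam n - ν₁) ^ 2 := by
  have d₁ : ∀ n, ν₁ - lam n ≠ 0 := fun n => sub_ne_zero.mpr (h₁ n)
  have d₂ : ∀ n, ν₂ - lam n ≠ 0 := fun n => sub_ne_zero.mpr (h₂ n)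
  -- key decomposition at a secular root
  have key : ∀ (ν : ℝ), (∀ n, ν - lam n ≠ 0) →
      ∑ n, (β n) ^ 2 * (2 * ν - lam n) / (lam n - ν) ^ 2 =
      (∑ n, (β n / (ν - lam n)) ^ 2) * ν + ∑ n, (β n) ^ 2 / (ν - lam n) := by
    intro ν hd
    rw [Finset.sum_mul, ← Finset.sum_add_distrib]
    apply Finset.sum_congr rfl
    intro n _
    have hd' := hd n
    rw [show (lam n - ν) ^ 2 = (ν - lam n) ^ 2 by ring]
    field_simp
    ring
  set S : ℝ := ∑ n, (β n / (ν₁ - lam n)) * (β n / (ν₂ - lam n)) with hSdef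
  have hCS : S ^ 2 ≤ 1 := by
    calc S ^ 2 ≤ (∑ n, (β n / (ν₁ - lam n)) ^ 2) * (∑ n, (β n / (ν₂ - lam n)) ^ 2) := by
          simpa [mul_pow] using
            Finset.sum_mul_sq_le_sq_mul_sq Finset.univ
              (fun n => β n / (ν₁ - lam n)) (fun n => β n / (ν₂ - lam n))
      _ = 1 := by rw [hr₁, hr₂]; ring
  have hS : S ≤ 1 := by nlinarith [sq_nonneg (S - 1)]
  have hdiff : ∑ n, (β n) ^ 2 / (ν₁ - lam n) - ∑ n, (β n) ^ 2 / (ν₂ - lam n)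
      = (ν₂ - ν₁) * S := by
    rw [hSdef, Finset.mul_sum, ← Finset.sum_sub_distrib]
    apply Finset.sum_congr rfl
    intro n _
    have := d₁ n
    have := d₂ n
    field_simp
    ring
  rw [key ν₁ d₁, key ν₂ d₂, hr₁, hr₂, one_mul, one_mul]
  nlinarith [hdiff, hS, hle]
end

section
/- Let λ ∈ ℝ^N and β ∈ ℝ^N with βₙ ≠ 0 for at least one n. Every root ν of the secular equation Σₙ (βₙ/(ν−λₙ))² = 1 that is smaller than all λₙ lies in the interval [ minₙ{λₙ − √N·|βₙ|}, min{ minₙ{λₙ − |βₙ|}, maxₙ{λₙ − √N·|βₙ|} } ]. -/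
theorem stmt_16 (N : ℕ) (lam β : Fin N → ℝ) (hβ : ∃ n, β n ≠ 0) (ν : ℝ)
    (hlt : ∀ n, ν < lam n)
    (hroot : ∑ n, (β n / (ν - lam n)) ^ 2 = 1) :
    Finset.univ.inf' ⟨hβ.choose, Finset.mem_univ _⟩
        (fun n => lam n - Real.sqrt N * |β n|) ≤ ν ∧
    ν ≤ min
        (Finset.univ.inf' ⟨hβ.choose, Finset.mem_univ _⟩ (fun n => lam n - |β n|))
        (Finset.univ.sup' ⟨hβ.choose, Finset.mem_univ _⟩
          (fun n => lam n - Real.sqrt N * |β n|)) := by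
  have hne : (Finset.univ : Finset (Fin N)).Nonempty := ⟨hβ.choose, Finset.mem_univ _⟩
  have hN : 0 < N := Fin.pos hβ.choose
  have hNR : (0:ℝ) < N := by exact_mod_cast hN
  have hd : ∀ n, 0 < lam n - ν := fun n => by linarith [hlt n]
  have hterm : ∀ n, (β n / (ν - lam n)) ^ 2 = (β n) ^ 2 / (lam n - ν) ^ 2 := by
    intro n
    have h2 : (ν - lam n) ^ 2 = (lam n - ν) ^ 2 := by ring
    rw [div_pow, h2]
  have hnn : ∀ n ∈ (Finset.univ : Finset (Fin N)), (0:ℝ) ≤ (β n / (ν - lam n)) ^ 2 :=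
    fun n _ => sq_nonneg _
  -- Part A: each term ≤ 1 hence ν ≤ lam n - |β n| for all n
  have hA : ∀ n, ν ≤ lam n - |β n| := by
    intro n
    have h1 : (β n / (ν - lam n)) ^ 2 ≤ 1 := by
      rw [← hroot]
      exact Finset.single_le_sum hnn (Finset.mem_univ n)
    rw [hterm n, div_le_one (pow_pos (hd n) 2)] at h1
    have := Real.sqrt_le_sqrt h1
    rw [Real.sqrt_sq_eq_abs, Real.sqrt_sq (hd n).le] at this
    linarith
  -- existence of a term ≥ 1/N
  have hex1 : ∃ n, (1:ℝ)/N ≤ (β n / (ν - lam n)) ^ 2 := by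
    by_contra h
    push_neg at h
    have hb : ∑ n, (β n / (ν - lam n)) ^ 2 < ∑ _n : Fin N, (1:ℝ)/N :=
      Finset.sum_lt_sum_of_nonempty hne (fun n _ => h n)
    rw [hroot, Finset.sum_const, Finset.card_univ, Fintype.card_fin, nsmul_eq_mul,
      mul_one_div, div_self (ne_of_gt hNR)] at hb
    exact lt_irrefl _ hb
  -- existence of a term ≤ 1/N
  have hex2 : ∃ n, (β n / (ν - lam n)) ^ 2 ≤ (1:ℝ)/N := by
    by_contra h
    push_neg at h
    have hb : ∑ _n : Fin N, (1:ℝ)/N < ∑ n, (β n / (ν - lam n)) ^ 2 :=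
      Finset.sum_lt_sum_of_nonempty hne (fun n _ => h n)
    rw [hroot, Finset.sum_const, Finset.card_univ, Fintype.card_fin, nsmul_eq_mul,
      mul_one_div, div_self (ne_of_gt hNR)] at hb
    exact lt_irrefl _ hb
  constructor
  · -- lower bound
    obtain ⟨n, hn⟩ := hex1
    rw [hterm n, le_div_iff₀ (pow_pos (hd n) 2), one_div, inv_mul_le_iff₀ hNR] at hn
    -- hn : (lam n - ν)^2 ≤ N * β n ^ 2
    have := Real.sqrt_le_sqrt hn
    rw [Real.sqrt_sq (hd n).le, Real.sqrt_mul (le_of_lt hNR), Real.sqrt_sq_eq_abs] at this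
    have h1 : lam n - Real.sqrt N * |β n| ≤ ν := by linarith
    exact le_trans (Finset.inf'_le _ (Finset.mem_univ n)) h1
  · refine le_min (Finset.le_inf' _ _ (fun n _ => hA n)) ?_
    obtain ⟨n, hn⟩ := hex2
    rw [hterm n, div_le_div_iff₀ (pow_pos (hd n) 2) hNR, one_mul] at hn
    -- hn : β n ^ 2 * N ≤ (lam n - ν)^2
    have hn' : (N:ℝ) * β n ^ 2 ≤ (lam n - ν) ^ 2 := by linarith
    have := Real.sqrt_le_sqrt hn'
    rw [Real.sqrt_sq (hd n).le, Real.sqrt_mul (le_of_lt hNR), Real.sqrt_sq_eq_abs] at this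
    have h1 : ν ≤ lam n - Real.sqrt N * |β n| := by linarith
    exact le_trans h1 (Finset.le_sup' (fun n => lam n - Real.sqrt N * |β n|) (Finset.mem_univ n))
end

section
/- Let ρ > 0, L ≥ 1, and ỹ ∈ ℂ^L with moduli sorted increasingly. On the sub-domain g₀ ≥ |ỹ_L|, the minimum of L_ρ(g₀, g) = −g₀ + (1/(2ρ))‖ỹ − g‖₂² subject to g₀ ≤ |g_l| for all l is attained at g₀ = max{ (ρ + Σₗ|ỹₗ|)/L, |ỹ_L| } and gₗ = g₀·exp(i·arg(ỹₗ)) for every l. -/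
theorem stmt_17 (L : ℕ) (hL : 0 < L) (ρ : ℝ) (hρ : 0 < ρ) (y : Fin L → ℂ)
    (hsort : ∀ i j : Fin L, i ≤ j → norm (y i) ≤ norm (y j)) :
    (∀ l, max ((ρ + ∑ m, norm (y m)) / L) (norm (y ⟨L - 1, Nat.sub_lt hL one_pos⟩)) ≤
        norm ((max ((ρ + ∑ m, norm (y m)) / L)
            (norm (y ⟨L - 1, Nat.sub_lt hL one_pos⟩)) : ℝ) *
          Complex.exp ((Complex.arg (y l) : ℂ) * Complex.I))) ∧
    norm (y ⟨L - 1, Nat.sub_lt hL one_pos⟩) ≤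
      max ((ρ + ∑ m, norm (y m)) / L)
        (norm (y ⟨L - 1, Nat.sub_lt hL one_pos⟩)) ∧
    ∀ (g₀ : ℝ) (g : Fin L → ℂ),
      (∀ l, g₀ ≤ norm (g l)) →
      norm (y ⟨L - 1, Nat.sub_lt hL one_pos⟩) ≤ g₀ →
      -(max ((ρ + ∑ m, norm (y m)) / L)
            (norm (y ⟨L - 1, Nat.sub_lt hL one_pos⟩))) +
          (1 / (2 * ρ)) * ∑ l, norm (y l -
            (max ((ρ + ∑ m, norm (y m)) / L)
                (norm (y ⟨L - 1, Nat.sub_lt hL one_pos⟩)) : ℝ) *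
              Complex.exp ((Complex.arg (y l) : ℂ) * Complex.I)) ^ 2 ≤
        -g₀ + (1 / (2 * ρ)) * ∑ l, norm (y l - g l) ^ 2 := by
  set lastIdx : Fin L := ⟨L - 1, Nat.sub_lt hL one_pos⟩ with hlast
  set S := ∑ m, norm (y m) with hS
  set a := norm (y lastIdx) with ha
  set M := max ((ρ + S) / L) a with hM
  have hLpos : (0:ℝ) < L := Nat.cast_pos.mpr hL
  have ha0 : 0 ≤ a := norm_nonneg _
  have hM0 : 0 ≤ M := le_trans ha0 (le_max_right _ _)
  have hal : ∀ l, norm (y l) ≤ a := by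
    intro l
    exact hsort l lastIdx (by
      simp only [Fin.le_def, hlast]
      exact Nat.le_sub_one_of_lt l.isLt)
  have habsM : ∀ l, norm ((M:ℂ) * Complex.exp ((Complex.arg (y l) : ℂ) * Complex.I)) = M := by
    intro l
    rw [norm_mul, Complex.norm_exp_ofReal_mul_I, mul_one, Complex.norm_real, Real.norm_eq_abs, abs_of_nonneg hM0]
  refine ⟨fun l => (habsM l).symm.le, le_max_right _ _, ?_⟩
  intro g₀ g hg hg₀
  have hterm : ∀ l, norm (y l - (M:ℝ) * Complex.exp ((Complex.arg (y l):ℂ) * Complex.I)) ^ 2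
      = (M - norm (y l)) ^ 2 := by
    intro l
    have h1 : y l - (M:ℝ) * Complex.exp ((Complex.arg (y l):ℂ) * Complex.I)
        = ((norm (y l) - M : ℝ):ℂ) * Complex.exp ((Complex.arg (y l):ℂ) * Complex.I) := by
      rw [Complex.ofReal_sub, sub_mul, Complex.norm_mul_exp_arg_mul_I]
    rw [h1, norm_mul, Complex.norm_exp_ofReal_mul_I, mul_one, Complex.norm_real, Real.norm_eq_abs, sq_abs]
    ring
  have hsum1 : ∑ l, norm (y l - (M:ℝ) * Complex.exp ((Complex.arg (y l):ℂ) * Complex.I)) ^ 2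
      = ∑ l, (M - norm (y l)) ^ 2 := Finset.sum_congr rfl fun l _ => hterm l
  have hsum2 : ∑ l, (g₀ - norm (y l)) ^ 2 ≤ ∑ l, norm (y l - g l) ^ 2 := by
    apply Finset.sum_le_sum
    intro l _
    have h1 : g₀ - norm (y l) ≤ norm (y l - g l) := by
      have h2 : norm (g l) - norm (y l) ≤ norm (y l - g l) := by
        have := norm_sub_norm_le (g l) (y l)
        rw [norm_sub_rev] at this
        simpa using this
      linarith [hg l]
    have h0 : 0 ≤ g₀ - norm (y l) := by linarith [hal l, hg₀]
    exact pow_le_pow_left₀ h0 h1 2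
  set Q := ∑ l, norm (y l) ^ 2 with hQ
  have expand : ∀ t : ℝ, ∑ l, (t - norm (y l)) ^ 2 = L * t ^ 2 - 2 * t * S + Q := by
    intro t
    have : ∀ l : Fin L, (t - norm (y l)) ^ 2
        = t ^ 2 - 2 * t * norm (y l) + norm (y l) ^ 2 := fun l => by ring
    rw [Finset.sum_congr rfl fun l _ => this l]
    rw [Finset.sum_add_distrib, Finset.sum_sub_distrib, Finset.sum_const, Finset.card_univ,
      Fintype.card_fin, ← Finset.mul_sum, hS, hQ, nsmul_eq_mul]
  have hLM : ρ + S ≤ L * M := by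
    have := le_max_left ((ρ + S) / L) a
    rw [div_le_iff₀ hLpos] at this
    linarith [this]
  have key : L * M ^ 2 - 2 * M * S - 2 * ρ * M ≤ L * g₀ ^ 2 - 2 * g₀ * S - 2 * ρ * g₀ := by
    rcases le_or_gt M g₀ with h | h
    · have p1 : 0 ≤ (L:ℝ) * (g₀ - M) ^ 2 := mul_nonneg hLpos.le (sq_nonneg _)
      have p2 : 0 ≤ (g₀ - M) * (L * M - (ρ + S)) :=
        mul_nonneg (by linarith) (by linarith)
      nlinarith [p1, p2]
    · have haM : a < M := lt_of_le_of_lt hg₀ h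
      have hMeq : M = (ρ + S) / L := by
        rcases max_choice ((ρ + S) / L) a with h' | h'
        · exact h'
        · rw [hM] at haM; rw [h'] at haM; exact absurd haM (lt_irrefl a)
      have hLMeq : L * M = ρ + S := by
        rw [hMeq]; field_simp
      have p1 : 0 ≤ (L:ℝ) * (g₀ - M) ^ 2 := mul_nonneg hLpos.le (sq_nonneg _)
      nlinarith [p1, hLMeq]
  have hrw : ∀ t : ℝ, -t + (1 / (2 * ρ)) * (L * t ^ 2 - 2 * t * S + Q)
      = (1 / (2 * ρ)) * (L * t ^ 2 - 2 * t * S - 2 * ρ * t + Q) := by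
    intro t; field_simp; ring
  calc -M + (1 / (2 * ρ)) * ∑ l, norm (y l - (M:ℝ) * Complex.exp ((Complex.arg (y l):ℂ) * Complex.I)) ^ 2
      = (1 / (2 * ρ)) * (L * M ^ 2 - 2 * M * S - 2 * ρ * M + Q) := by
        rw [hsum1, expand M, hrw M]
    _ ≤ (1 / (2 * ρ)) * (L * g₀ ^ 2 - 2 * g₀ * S - 2 * ρ * g₀ + Q) := by
        apply mul_le_mul_of_nonneg_left (by linarith) (by positivity)
    _ = -g₀ + (1 / (2 * ρ)) * ∑ l, (g₀ - norm (y l)) ^ 2 := by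
        rw [expand g₀, hrw g₀]
    _ ≤ -g₀ + (1 / (2 * ρ)) * ∑ l, norm (y l - g l) ^ 2 := by
        have : 0 ≤ 1 / (2 * ρ) := by positivity
        nlinarith [mul_le_mul_of_nonneg_left hsum2 this]
end
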